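/- Fix ρ ≥ 0, δ ∈ (0,1), and two arms with mean–variance values MV_i = σ_i² − ρμ_i, i ∈ {1, i*}, with gap Δ = MV₁ − MV_{i*} > 0. Suppose for the current pull counts s (for arm 1) and s* (for arm i*): |μ̂_{1,s} − μ₁| ≤ √(log(1/δ)/(2s)), |σ̂²_{1,s} − σ₁²| ≤ 5√(log(1/δ)/(2s)), and similarly for arm i*. If the lower-confidence index of arm 1 satisfies B₁ = σ̂²_{1,s} − ρμ̂_{1,s} − (5+ρ)√(log(1/δ)/(2s)) ≤ B_{i*} = σ̂²_{i*,s*} − ρμ̂_{i*,s*} − (5+ρ)√(log(1/δ)/(2s*)), then s ≤ 2(5+ρ)² log(1/δ) / Δ². -/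
import Mathlib
set_option maxHeartbeats 800000


theorem mvlcb_pull_bound (ρ : ℝ) (hρ : 0 ≤ ρ) (δ : ℝ) (hδ : δ ∈ Set.Ioo (0 : ℝ) 1)
    (μ₁ σ₁ μs σs : ℝ)
    (Δ : ℝ) (hΔdef : Δ = (σ₁ - ρ * μ₁) - (σs - ρ * μs)) (hΔ : 0 < Δ)
    (s sstar : ℕ) (hs : 1 ≤ s) (hsstar : 1 ≤ sstar)
    (μh₁ σh₁ μhs σhs : ℝ)
    (h1 : |μh₁ - μ₁| ≤ Real.sqrt (Real.log (1 / δ) / (2 * s)))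
    (h2 : |σh₁ - σ₁| ≤ 5 * Real.sqrt (Real.log (1 / δ) / (2 * s)))
    (h3 : |μhs - μs| ≤ Real.sqrt (Real.log (1 / δ) / (2 * sstar)))
    (h4 : |σhs - σs| ≤ 5 * Real.sqrt (Real.log (1 / δ) / (2 * sstar)))
    (hB : σh₁ - ρ * μh₁ - (5 + ρ) * Real.sqrt (Real.log (1 / δ) / (2 * s))
        ≤ σhs - ρ * μhs - (5 + ρ) * Real.sqrt (Real.log (1 / δ) / (2 * sstar))) :
    (s : ℝ) ≤ 2 * (5 + ρ) ^ 2 * Real.log (1 / δ) / Δ ^ 2 := by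
  obtain ⟨hδ0, hδ1⟩ := hδ
  set L := Real.log (1 / δ) with hLdef
  have hL : 0 < L := Real.log_pos (by rw [lt_div_iff₀ hδ0]; linarith)
  have hs0 : (0:ℝ) < s := by exact_mod_cast hs
  have hss0 : (0:ℝ) < sstar := by exact_mod_cast hsstar
  set c := Real.sqrt (L / (2 * s)) with hcdef
  set cs := Real.sqrt (L / (2 * sstar)) with hcsdef
  have hc0 : 0 ≤ c := Real.sqrt_nonneg _
  have hcs0 : 0 ≤ cs := Real.sqrt_nonneg _
  have hcsq : c ^ 2 = L / (2 * s) := Real.sq_sqrt (by positivity)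
  -- lower bound for arm 1 index
  have e1 : μh₁ ≤ μ₁ + c := by have := abs_le.mp h1; linarith [this.2]
  have e2 : σ₁ - 5 * c ≤ σh₁ := by have := abs_le.mp h2; linarith [this.1]
  have e3 : μs - cs ≤ μhs := by have := abs_le.mp h3; linarith [this.1]
  have e4 : σhs ≤ σs + 5 * cs := by have := abs_le.mp h4; linarith [this.2]
  have hρμ1 : ρ * μh₁ ≤ ρ * (μ₁ + c) := mul_le_mul_of_nonneg_left e1 hρ
  have hρμs : ρ * (μs - cs) ≤ ρ * μhs := mul_le_mul_of_nonneg_left e3 hρ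
  have A : ρ * μh₁ ≤ ρ * μ₁ + ρ * c := by linear_combination hρμ1
  have As : ρ * μs - ρ * cs ≤ ρ * μhs := by linear_combination hρμs
  have key : Δ ≤ 2 * (5 + ρ) * c := by
    subst hΔdef; nlinarith [A, As, e2, e4, hB]
  have hΔsq : Δ ^ 2 ≤ (2 * (5 + ρ)) ^ 2 * c ^ 2 := by
    nlinarith [key, hΔ, hc0]
  have hLc : L = c ^ 2 * (2 * s) := by
    rw [hcsq]; field_simp
  rw [le_div_iff₀ (by positivity)]
  have := mul_le_mul_of_nonneg_right hΔsq (le_of_lt hs0)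
  rw [hLc]; nlinarith [this]
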